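/- In A_n(X) with n even, for all a,b,c,d ∈ X one has W(a,b)·Θ·W(c,d) = F(a,c)·G(b,d)·Ω, where Θ = e_1 e_3 ⋯ e_{n−1} and Ω = e_2 e_4 ⋯ e_{n−2} (Ω = 1 if n = 2). -/
import Mathlib


/-- The ascending product `e j * e (j+1) * ⋯ * e k` (empty if `k + 1 ≤ j`). -/
def ascProd {A : Type*} [Ring A] (e : ℕ → A) (j k : ℕ) : A :=
  ((List.range (k + 1 - j)).map (fun i => e (j + i))).prod

/-- The descending product `e k * e (k-1) * ⋯ * e j` (empty if `k + 1 ≤ j`). -/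
def descProd {A : Type*} [Ring A] (e : ℕ → A) (j k : ℕ) : A :=
  ((List.range (k + 1 - j)).map (fun i => e (k - i))).prod

/-- For `n` odd, `O = e 1 * e 3 * ⋯ * e (n-2)` (equal to `1` when `n = 1`). -/
def Oprod {A : Type*} [Ring A] (e : ℕ → A) (n : ℕ) : A :=
  ((List.range ((n - 1) / 2)).map (fun i => e (2 * i + 1))).prod

/-- For `n` odd, `E = e 2 * e 4 * ⋯ * e (n-1)` (equal to `1` when `n = 1`). -/
def Eprod {A : Type*} [Ring A] (e : ℕ → A) (n : ℕ) : A :=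
  ((List.range ((n - 1) / 2)).map (fun i => e (2 * i + 2))).prod

/-- For `n` even, `Θ = e 1 * e 3 * ⋯ * e (n-1)`. -/
def ThetaProd {A : Type*} [Ring A] (e : ℕ → A) (n : ℕ) : A :=
  ((List.range (n / 2)).map (fun i => e (2 * i + 1))).prod

/-- For `n` even, `Ω = e 2 * e 4 * ⋯ * e (n-2)` (equal to `1` when `n = 2`). -/
def OmegaProd {A : Type*} [Ring A] (e : ℕ → A) (n : ℕ) : A :=
  ((List.range (n / 2 - 1)).map (fun i => e (2 * i + 2))).prod

section helpers
variable {A : Type*} [Ring A] (e : ℕ → A)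

lemma ascProd_empty {j k : ℕ} (h : k + 1 ≤ j) : ascProd e j k = 1 := by
  unfold ascProd
  rw [Nat.sub_eq_zero_of_le h]
  simp

lemma ascProd_cons {j k : ℕ} (h : j ≤ k) : ascProd e j k = e j * ascProd e (j+1) k := by
  unfold ascProd
  have h1 : k + 1 - j = (k - j) + 1 := by omega
  have h2 : k + 1 - (j + 1) = k - j := by omega
  rw [h1, h2, List.range_succ_eq_map, List.map_cons, List.prod_cons, List.map_map]
  congr 2
  apply List.map_congr_left
  intro i _
  simp only [Function.comp_apply]
  congr 1
  omega

lemma prod_succ_front (f : ℕ → A) (t : ℕ) :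
    ((List.range (t+1)).map f).prod = f 0 * ((List.range t).map (fun i => f (i+1))).prod := by
  rw [List.range_succ_eq_map, List.map_cons, List.prod_cons, List.map_map]
  rfl

lemma commute_range_prod (x : A) (f : ℕ → A) (t : ℕ)
    (h : ∀ i < t, x * f i = f i * x) :
    x * ((List.range t).map f).prod = ((List.range t).map f).prod * x := by
  have : Commute x ((List.range t).map f).prod := by
    apply Commute.list_prod_right
    intro y hy
    rw [List.mem_map] at hy
    obtain ⟨i, hi, rfl⟩ := hy
    exact h i (List.mem_range.mp hi)
  exact this.eq

lemma shiftW (x : A) : ∀ t : ℕ, (∀ i < t, e (2*i+3) * x = x * e (2*i+2)) →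
    ((List.range t).map (fun i => e (2*i+3))).prod * x
      = x * ((List.range t).map (fun i => e (2*i+2))).prod := by
  intro t
  induction t with
  | zero => intro _; simp
  | succ t ih =>
    intro h
    rw [List.range_succ, List.map_append, List.map_append, List.prod_append, List.prod_append]
    simp only [List.map_cons, List.map_nil, List.prod_cons, List.prod_nil, mul_one]
    rw [mul_assoc, h t (by omega), ← mul_assoc, ih (fun i hi => h i (by omega)), mul_assoc]

lemma collapse (m : ℕ)
    (h5 : ∀ i, 2 ≤ i → i + 1 ≤ 2*m - 1 → e i * e (i+1) * e i = e i)
    (h1 : ∀ i j, 2 ≤ i → i + 2 ≤ j → j ≤ 2*m - 1 → e i * e j = e j * e i) :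
    ∀ t k, k + t + 1 = m →
    ascProd e (2*k+2) (2*m-1) * ((List.range t).map (fun i => e (2*(k+i)+2))).prod
      = ((List.range t).map (fun i => e (2*(k+i)+2))).prod := by
  intro t
  induction t with
  | zero =>
    intro k hk
    rw [ascProd_empty e (by omega)]
    simp
  | succ t ih =>
    intro k hk
    have hsplitP : ((List.range (t+1)).map (fun i => e (2*(k+i)+2))).prod
        = e (2*k+2) * ((List.range t).map (fun i => e (2*(k+1+i)+2))).prod := by
      rw [prod_succ_front]
      congr 1
      congr 1
      apply List.map_congr_left
      intro i _
      congr 1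
      omega
    have e1 : ascProd e (2*k+2) (2*m-1) = e (2*k+2) * ascProd e (2*k+3) (2*m-1) := by
      rw [ascProd_cons e (show 2*k+2 ≤ 2*m-1 by omega)]
    have e2 : ascProd e (2*k+3) (2*m-1) = e (2*k+3) * ascProd e (2*k+4) (2*m-1) := by
      rw [ascProd_cons e (show 2*k+3 ≤ 2*m-1 by omega)]
    have hcomm : ∀ x : A, ascProd e (2*k+4) (2*m-1) * (e (2*k+2) * x)
        = e (2*k+2) * (ascProd e (2*k+4) (2*m-1) * x) := by
      intro x
      have : e (2*k+2) * ascProd e (2*k+4) (2*m-1)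
          = ascProd e (2*k+4) (2*m-1) * e (2*k+2) := by
        unfold ascProd
        apply commute_range_prod
        intro i hi
        exact h1 (2*k+2) (2*k+4+i) (by omega) (by omega) (by omega)
      rw [← mul_assoc, ← this, mul_assoc]
    have e23 : e (2*k+2) * e (2*k+3) * e (2*k+2) = e (2*k+2) := by
      have := h5 (2*k+2) (by omega) (by omega)
      rwa [show 2*k+2+1 = 2*k+3 by omega] at this
    have ihk : ascProd e (2*k+4) (2*m-1) * ((List.range t).map (fun i => e (2*(k+1+i)+2))).prod
        = ((List.range t).map (fun i => e (2*(k+1+i)+2))).prod := by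
      have := ih (k+1) (by omega)
      rwa [show 2*(k+1)+2 = 2*k+4 by omega] at this
    rw [hsplitP, e1, e2]
    simp only [mul_assoc]
    rw [hcomm, ihk, ← mul_assoc, ← mul_assoc, e23]

lemma theta_split (m : ℕ) (hm : 1 ≤ m) :
    ((List.range m).map (fun i => e (2*i+1))).prod
      = e 1 * ((List.range (m-1)).map (fun i => e (2*i+3))).prod := by
  rw [show m = (m-1)+1 by omega, prod_succ_front]
  congr 1

end helpers


/-- The defining relations (L1)–(L38) of the algebraic label algebra `A_n(X)`,
with TL generators `e i` (`1 ≤ i ≤ n - 1`), label generators `F a b`, `G a b`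
(even) and `W a b`, `V a b` (odd), and parameters `β`, `α a b`, `δ a b`, `γ a b`
in a commutative base ring `R`. -/
structure LabelAlgebraRel (R : Type*) [CommRing R] (A : Type*) [Ring A] [Algebra R A]
    (X : Type*) (n : ℕ) (e : ℕ → A) (F G W V : X → X → A)
    (β : R) (α δ γ : X → X → R) : Prop where
  L1 : ∀ i j, 1 ≤ i → i ≤ n - 1 → 1 ≤ j → j ≤ n - 1 → (i + 2 ≤ j ∨ j + 2 ≤ i) →
    e i * e j = e j * e i
  L2 : ∀ (a b : X) (j : ℕ), 2 ≤ j → j ≤ n - 1 → F a b * e j = e j * F a b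
  L3 : ∀ (a b : X) (j : ℕ), 1 ≤ j → j ≤ n - 2 → G a b * e j = e j * G a b
  L4 : ∀ (a b c d : X), 2 ≤ n → F a b * G c d = G c d * F a b
  L5 : ∀ i j, 1 ≤ i → i ≤ n - 1 → 1 ≤ j → j ≤ n - 1 → (i = j + 1 ∨ j = i + 1) →
    e i * e j * e i = e i
  L6 : ∀ (a b : X) (j : ℕ), 2 ≤ j → j ≤ n - 1 → e j * W a b = W a b * e (j - 1)
  L7 : ∀ (a b : X) (j : ℕ), 1 ≤ j → j ≤ n - 2 → e j * V a b = V a b * e (j + 1)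
  L8 : ∀ (a b c d : X), 2 ≤ n → G a b * W c d = W c a * e (n - 1) * G b d
  L9 : ∀ (a b c d : X), 2 ≤ n → F a b * V c d = V a d * e 1 * F b c
  L10 : ∀ (a b c d : X), 2 ≤ n → W a b * F c d = F a c * e 1 * W d b
  L11 : ∀ (a b c d : X), 2 ≤ n → V a b * G c d = G b c * e (n - 1) * V a d
  L12 : ∀ (a b : X), 2 ≤ n → e 1 * W a b = ascProd e 1 (n - 1) * V a b
  L13 : ∀ (a b : X), 2 ≤ n → W a b * e (n - 1) = V a b * ascProd e 1 (n - 1)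
  L14 : ∀ (a b : X), 2 ≤ n → e (n - 1) * V a b = descProd e 1 (n - 1) * W a b
  L15 : ∀ (a b : X), 2 ≤ n → V a b * e 1 = W a b * descProd e 1 (n - 1)
  L16 : ∀ (a b c d : X), W a b * W c d = F a c * ascProd e 1 (n - 1) * G b d
  L17 : ∀ (a b c d : X), V a b * V c d = G b d * descProd e 1 (n - 1) * F a c
  L18 : ∀ (a b c d : X), 2 ≤ n → V a b * e 1 * W c d = F a c * G b d
  L19 : ∀ j, 1 ≤ j → j ≤ n - 1 → e j * e j = β • e j
  L20 : ∀ (a b c d : X), F c a * F b d = α a b • F c d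
  L21 : ∀ (a b : X), 2 ≤ n → e 1 * F a b * e 1 = α a b • e 1
  L22 : ∀ (a b c d : X), F c a * W b d = α a b • W c d
  L23 : ∀ (a b c d : X), V a d * F b c = α a b • V c d
  L24 : ∀ (a b c d : X), V a c * W b d = α a b • G c d
  L25 : ∀ (a b c d : X), G c a * G b d = δ a b • G c d
  L26 : ∀ (a b : X), 2 ≤ n → e (n - 1) * G a b * e (n - 1) = δ a b • e (n - 1)
  L27 : ∀ (a b c d : X), G c a * V d b = δ a b • V d c
  L28 : ∀ (a b c d : X), W c a * G b d = δ a b • W c d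
  L29 : ∀ (a b c d : X), W c a * V d b = δ a b • F c d
  L30 : Odd n → ∀ (a b c d : X),
    W c b * Oprod e n * W a d * Oprod e n = γ a b • (W c d * Oprod e n)
  L31 : Odd n → ∀ (a b c d : X),
    F c a * Eprod e n * V d b * Eprod e n = γ a b • (F c d * Eprod e n)
  L32 : Odd n → ∀ (a b c d : X),
    V a d * Eprod e n * V c b * Eprod e n = γ a b • (V c d * Eprod e n)
  L33 : Odd n → ∀ (a b c d : X),
    G c b * Oprod e n * W a d * Oprod e n = γ a b • (G c d * Oprod e n)
  L34 : Even n → ∀ (a b : X),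
    ThetaProd e n * W a b * ThetaProd e n = γ a b • ThetaProd e n
  L35 : n = 1 → ∀ (a b c d : X), F c a * G b d = γ a b • W c d
  L36 : n = 1 → ∀ (a b c d : X), G d b * F a c = γ a b • V c d
  L37 : n = 1 → ∀ (a b c d : X), W c b * F a d = γ a b • F c d
  L38 : n = 1 → ∀ (a b c d : X), V a c * G b d = γ a b • G c d

theorem stmt {R : Type*} [CommRing R] {A : Type*} [Ring A] [Algebra R A] {X : Type*}
    (n : ℕ) (e : ℕ → A) (F G W V : X → X → A) (β : R) (α δ γ : X → X → R)
    (hrel : LabelAlgebraRel R A X n e F G W V β α δ γ)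
    (heven : Even n) (a b c d : X) :
    W a b * ThetaProd e n * W c d = F a c * G b d * OmegaProd e n := by
  by_cases h0 : n = 0
  · subst h0
    have h16 := hrel.L16 a b c d
    rw [ascProd_empty e (by omega)] at h16
    simp only [ThetaProd, OmegaProd]
    simp only [Nat.zero_div, Nat.zero_sub, List.range_zero, List.map_nil, List.prod_nil,
      mul_one, one_mul]
    rw [h16, mul_one]
  · by_cases h2 : n = 2
    · subst h2
      have hT : ThetaProd e 2 = e 1 := by
        simp [ThetaProd, show List.range 1 = [0] from rfl]
      have hO : OmegaProd e 2 = 1 := by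
        simp [OmegaProd]
      have h13 := hrel.L13 a b (le_refl 2)
      have hasc : ascProd e 1 (2 - 1) = e 1 := by
        rw [ascProd_cons e (by norm_num), ascProd_empty e (by norm_num), mul_one]
      rw [hasc] at h13
      have h18 := hrel.L18 a b c d (le_refl 2)
      rw [hT, hO, mul_one]
      calc W a b * e 1 * W c d = V a b * e 1 * W c d := by
            rw [show (2:ℕ) - 1 = 1 from rfl] at h13
            rw [h13]
        _ = F a c * G b d := h18
    · -- main case : n = 2*m with m ≥ 2
      obtain ⟨m, rfl⟩ : ∃ m, n = 2 * m := by
        obtain ⟨r, hr⟩ := heven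
        exact ⟨r, by omega⟩
      have hm2 : 2 ≤ m := by omega
      obtain ⟨Ωl, hΩl⟩ : ∃ x : A, x = ((List.range (m-1)).map (fun i => e (2*i+2))).prod :=
        ⟨_, rfl⟩
      obtain ⟨T, hTe⟩ : ∃ x : A, x = ((List.range (m-1)).map (fun i => e (2*i+3))).prod :=
        ⟨_, rfl⟩
      have hTheta : ThetaProd e (2*m) = e 1 * T := by
        unfold ThetaProd
        rw [show 2*m/2 = m by omega, theta_split e m (by omega), hTe]
      have hOmega : OmegaProd e (2*m) = Ωl := by
        unfold OmegaProd
        rw [show 2*m/2 = m by omega, hΩl]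
      have hshift : T * W c d = W c d * Ωl := by
        rw [hTe, hΩl]
        apply shiftW
        intro i hi
        have := hrel.L6 c d (2*i+3) (by omega) (by omega)
        rwa [show 2*i+3-1 = 2*i+2 by omega] at this
      have hW1 : W a b * e 1 = e 2 * W a b := by
        have := hrel.L6 a b 2 (le_refl 2) (by omega)
        rw [show (2:ℕ)-1 = 1 from rfl] at this
        exact this.symm
      have h212 : e 2 * e 1 * e 2 = e 2 :=
        hrel.L5 2 1 (by omega) (by omega) (by omega) (by omega) (Or.inl rfl)
      have hasc : e 2 * ascProd e 1 (2*m-1) = ascProd e 2 (2*m-1) := by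
        have c1 : ascProd e 1 (2*m-1) = e 1 * ascProd e 2 (2*m-1) := by
          rw [ascProd_cons e (show 1 ≤ 2*m-1 by omega)]
        have c2 : ascProd e 2 (2*m-1) = e 2 * ascProd e 3 (2*m-1) := by
          rw [ascProd_cons e (show 2 ≤ 2*m-1 by omega)]
        rw [c1, c2, ← mul_assoc, ← mul_assoc, h212]
      have hcol : ascProd e 2 (2*m-1) * Ωl = Ωl := by
        have h5' : ∀ i, 2 ≤ i → i + 1 ≤ 2*m - 1 → e i * e (i+1) * e i = e i := by
          intro i hi hi2
          exact hrel.L5 i (i+1) (by omega) (by omega) (by omega) (by omega) (Or.inr rfl)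
        have h1' : ∀ i j, 2 ≤ i → i + 2 ≤ j → j ≤ 2*m - 1 → e i * e j = e j * e i := by
          intro i j hi hij hj
          exact hrel.L1 i j (by omega) (by omega) (by omega) (by omega) (Or.inl hij)
        have hc := collapse e m h5' h1' (m-1) 0 (by omega)
        have hΩ' : ((List.range (m-1)).map (fun i => e (2*(0+i)+2))).prod = Ωl := by
          rw [hΩl]
          congr 1
          apply List.map_congr_left
          intro i _
          congr 1
          omega
        rw [hΩ'] at hc
        rwa [show 2*0+2 = 2 by omega] at hc
      have hG : G b d * Ωl = Ωl * G b d := by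
        rw [hΩl]
        apply commute_range_prod
        intro i hi
        exact hrel.L3 b d (2*i+2) (by omega) (by omega)
      have hF : F a c * e 2 = e 2 * F a c := hrel.L2 a c 2 (le_refl 2) (by omega)
      rw [hTheta, hOmega]
      have h16 := hrel.L16 a b c d
      rw [show 2*m - 1 = 2*m - 1 from rfl] at h16
      calc W a b * (e 1 * T) * W c d
          = W a b * e 1 * T * W c d := by rw [← mul_assoc]
        _ = e 2 * W a b * T * W c d := by rw [hW1]
        _ = e 2 * W a b * (T * W c d) := by rw [mul_assoc]
        _ = e 2 * W a b * (W c d * Ωl) := by rw [hshift]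
        _ = e 2 * (W a b * W c d) * Ωl := by
            simp only [mul_assoc]
        _ = e 2 * (F a c * ascProd e 1 (2*m-1) * G b d) * Ωl := by rw [h16]
        _ = F a c * (e 2 * ascProd e 1 (2*m-1)) * G b d * Ωl := by
            rw [← mul_assoc (e 2), ← mul_assoc (e 2), ← hF, mul_assoc (F a c)]
        _ = F a c * ascProd e 2 (2*m-1) * G b d * Ωl := by rw [hasc]
        _ = F a c * ascProd e 2 (2*m-1) * (G b d * Ωl) := by rw [mul_assoc]
        _ = F a c * ascProd e 2 (2*m-1) * (Ωl * G b d) := by rw [hG]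
        _ = F a c * (ascProd e 2 (2*m-1) * Ωl) * G b d := by
            simp only [mul_assoc]
        _ = F a c * Ωl * G b d := by rw [hcol]
        _ = F a c * (G b d * Ωl) := by rw [mul_assoc, ← hG]
        _ = F a c * G b d * Ωl := by rw [← mul_assoc]
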